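/- Let g be a differentiable function on ℝ^{n₁×n₂} and suppose g(X + tΔ) ≤ g(X) + t⟨∇g(X), Δ⟩ + (L t²/2)‖Δ‖_F² for the specific direction Δ = −∇g(LRᵀ) R (RᵀR)^{†} Rᵀ and all t ∈ [0,1] (restricted L-smoothness along low-rank directions). Then the preconditioned update L⁺ = L − η∇g(LRᵀ)R(RᵀR)^{†} with step η ∈ (0, 1] satisfies g(L⁺Rᵀ) ≤ g(LRᵀ) − η(1 − Lη/2)·‖∇g(LRᵀ) R (RᵀR)^{†/2}‖_F². -/
import Mathlib

open Matrix

/-- Squared Frobenius norm of a real matrix. -/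
noncomputable def frobSq {m n : Type*} [Fintype m] [Fintype n] (A : Matrix m n ℝ) : ℝ :=
  ∑ i, ∑ j, (A i j)^2

/-- Trace inner product `⟨A,B⟩ = trace(AᵀB)`. -/
noncomputable def minner {m n : Type*} [Fintype m] [Fintype n] (A B : Matrix m n ℝ) : ℝ :=
  ∑ i, ∑ j, A i j * B i j

lemma frobSq_eq_trace {m n : Type*} [Fintype m] [Fintype n] (A : Matrix m n ℝ) :
    frobSq A = (Aᵀ * A).trace := by
  simp only [frobSq, Matrix.trace, Matrix.diag, Matrix.mul_apply, Matrix.transpose_apply, sq]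
  rw [Finset.sum_comm]

lemma minner_eq_trace {m n : Type*} [Fintype m] [Fintype n] (A B : Matrix m n ℝ) :
    minner A B = (Aᵀ * B).trace := by
  simp only [minner, Matrix.trace, Matrix.diag, Matrix.mul_apply, Matrix.transpose_apply]
  rw [Finset.sum_comm]

lemma sym_cancel {r : ℕ} (S B : Matrix (Fin r) (Fin r) ℝ) (hSsym : Sᵀ = S)
    (h : S * S * B = 0) : S * B = 0 := by
  have : (S * B)ᴴ * (S * B) = 0 := by
    simp only [conjTranspose_eq_transpose_of_trivial, transpose_mul, hSsym]
    calc Bᵀ * S * (S * B) = Bᵀ * (S * S * B) := by noncomm_ring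
    _ = 0 := by rw [h, Matrix.mul_zero]
  exact Matrix.conjTranspose_mul_self_eq_zero.mp this

/-- One preconditioned descent step: if `g` satisfies the restricted smoothness bound along the
direction `Δ = −∇g(LRᵀ) R (RᵀR)^{†} Rᵀ` for all `t ∈ [0,1]`, then the update
`L⁺ = L − η ∇g(LRᵀ) R (RᵀR)^{†}` with `η ∈ (0,1]` satisfies
`g(L⁺Rᵀ) ≤ g(LRᵀ) − η(1 − Lη/2)‖∇g(LRᵀ) R (RᵀR)^{†/2}‖_F²`. -/
theorem preconditioned_descent_step
    {n₁ n₂ r : ℕ} (Lc η : ℝ) (hη0 : 0 < η) (hη1 : η ≤ 1)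
    (g : Matrix (Fin n₁) (Fin n₂) ℝ → ℝ)
    (G : Matrix (Fin n₁) (Fin n₂) ℝ)  -- the gradient ∇g(LRᵀ)
    (L : Matrix (Fin n₁) (Fin r) ℝ) (R : Matrix (Fin n₂) (Fin r) ℝ)
    (P S : Matrix (Fin r) (Fin r) ℝ)
    -- `P = (RᵀR)^{†}` via the Penrose conditions, `S = (RᵀR)^{†/2}` its principal root
    (hP1 : (Rᵀ * R) * P * (Rᵀ * R) = Rᵀ * R)
    (hP2 : P * (Rᵀ * R) * P = P)
    (hP3 : ((Rᵀ * R) * P)ᵀ = (Rᵀ * R) * P)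
    (hP4 : (P * (Rᵀ * R))ᵀ = P * (Rᵀ * R))
    (hSsym : Sᵀ = S) (hSpsd : S.PosSemidef) (hSS : S * S = P)
    (Δ : Matrix (Fin n₁) (Fin n₂) ℝ) (hΔ : Δ = -(G * R * P * Rᵀ))
    (hsmooth : ∀ t : ℝ, t ∈ Set.Icc (0 : ℝ) 1 →
      g (L * Rᵀ + t • Δ) ≤ g (L * Rᵀ) + t * minner G Δ + Lc * t^2 / 2 * frobSq Δ)
    (Lplus : Matrix (Fin n₁) (Fin r) ℝ) (hLplus : Lplus = L - η • (G * R * P)) :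
    g (Lplus * Rᵀ) ≤ g (L * Rᵀ) - η * (1 - Lc * η / 2) * frobSq (G * R * S) := by
  have hPsym : Pᵀ = P := by rw [← hSS, transpose_mul, hSsym]
  -- key identity: S (RᵀR) P = S
  have hkey : S * ((Rᵀ * R) * P - 1) = 0 := by
    apply sym_cancel _ _ hSsym
    have : S * S * ((Rᵀ * R) * P - 1) = P * (Rᵀ * R) * P - P := by
      rw [hSS]; noncomm_ring
    rw [this, hP2, sub_self]
  have hkey1 : S * ((Rᵀ * R) * P) = S := by
    have := hkey
    rw [Matrix.mul_sub, Matrix.mul_one, sub_eq_zero] at this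
    exact this
  have hkey2 : P * (Rᵀ * R) * S = S := by
    have := congrArg Matrix.transpose hkey1
    simpa [transpose_mul, hSsym, hPsym, Matrix.mul_assoc] using this
  set K : Matrix (Fin n₁) (Fin r) ℝ := G * R * S with hK
  have hΔK : Δ = -(K * (S * Rᵀ)) := by
    rw [hΔ, hK, ← hSS]
    congr 1
    simp only [Matrix.mul_assoc]
  have hKM : K * ((S * Rᵀ) * (R * S)) = K := by
    calc K * ((S * Rᵀ) * (R * S)) = G * R * (P * (Rᵀ * R) * S) := by
          rw [hK, ← hSS]; simp only [Matrix.mul_assoc]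
    _ = K := by rw [hkey2, hK]
  -- minner G Δ = - frobSq K
  have hm : minner G Δ = - frobSq (G * R * S) := by
    calc minner G Δ = -((Gᵀ * (K * (S * Rᵀ))).trace) := by
          rw [minner_eq_trace, hΔK, Matrix.mul_neg, trace_neg]
    _ = -(((Gᵀ * K) * (S * Rᵀ)).trace) := by rw [← Matrix.mul_assoc Gᵀ K (S * Rᵀ)]
    _ = -(((S * Rᵀ) * (Gᵀ * K)).trace) := by rw [Matrix.trace_mul_comm]
    _ = -((Kᵀ * K).trace) := by
          rw [neg_inj]
          congr 1
          rw [hK]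
          simp only [transpose_mul, hSsym, transpose_transpose, Matrix.mul_assoc]
    _ = -frobSq (G * R * S) := by rw [frobSq_eq_trace, hK]
  -- frobSq Δ = frobSq K
  have hf : frobSq Δ = frobSq (G * R * S) := by
    have e : Δᵀ * Δ = (R * S) * (Kᵀ * (K * (S * Rᵀ))) := by
      rw [hΔK]
      simp only [transpose_neg, Matrix.neg_mul, Matrix.mul_neg, neg_neg, transpose_mul,
        hSsym, transpose_transpose, Matrix.mul_assoc]
    calc frobSq Δ = ((R * S) * (Kᵀ * (K * (S * Rᵀ)))).trace := by rw [frobSq_eq_trace, e]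
    _ = ((Kᵀ * (K * (S * Rᵀ))) * (R * S)).trace := Matrix.trace_mul_comm _ _
    _ = (Kᵀ * (K * ((S * Rᵀ) * (R * S)))).trace := by congr 1; simp only [Matrix.mul_assoc]
    _ = (Kᵀ * K).trace := by rw [hKM]
    _ = frobSq (G * R * S) := by rw [frobSq_eq_trace, hK]
  -- the update point
  have hpt : Lplus * Rᵀ = L * Rᵀ + η • Δ := by
    rw [hLplus, hΔ, Matrix.sub_mul, Matrix.smul_mul, smul_neg, sub_eq_add_neg, Matrix.mul_assoc]
  have hs := hsmooth η ⟨le_of_lt hη0, hη1⟩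
  rw [← hpt] at hs
  rw [hm, hf] at hs
  calc g (Lplus * Rᵀ) ≤ g (L * Rᵀ) + η * -frobSq (G * R * S) +
        Lc * η ^ 2 / 2 * frobSq (G * R * S) := hs
  _ = g (L * Rᵀ) - η * (1 - Lc * η / 2) * frobSq (G * R * S) := by ring
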